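/- If p and q are MP-words and the standard form of q^{-1} p (with respect to Σ) is p' (q')^{-1} with p', q' MP-words, then μ(p') ≤ μ(p) + |q|, where μ denotes the maximal subscript occurring in a word. -/

import Mathlib

abbrev Letter := ℕ × Bool
abbrev Word := List Letter

def pos (i : ℕ) : Letter := (i, true)
def neg (i : ℕ) : Letter := (i, false)

/-- The rewriting rules of the system Σ. -/
inductive SigmaRule : Word → Word → Prop
  | cancel (i : ℕ) : SigmaRule [neg i, pos i] [pos i, neg i]
  | negPos (i j : ℕ) (h : i < j) : SigmaRule [neg i, pos j] [pos (j+1), neg i]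
  | posNegInv (i j : ℕ) (h : i < j) : SigmaRule [neg j, pos i] [pos i, neg (j+1)]
  | posPos (i j : ℕ) (h : i < j) : SigmaRule [pos j, pos i] [pos i, pos (j+1)]
  | negNeg (i j : ℕ) (h : i < j) : SigmaRule [neg i, neg j] [neg (j+1), neg i]

/-- One rewriting step: replace an occurrence of a left-hand side by the right-hand side. -/
def Step (u v : Word) : Prop :=
  ∃ a b l r : Word, SigmaRule l r ∧ u = a ++ l ++ b ∧ v = a ++ r ++ b

/-- A word is Σ-irreducible if no rule applies. -/
def SigmaIrreducible (w : Word) : Prop := ∀ v, ¬ Step w v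

/-- Maximal subscript occurring in a positive word (0 for the empty word). -/
def mu (l : List ℕ) : ℕ := l.foldr max 0

/-!
Call `k + n` the weight of an occurrence of a positive letter `x_k` preceded by `n` negative
letters, and the largest weight in a word its potential. The potential of `q⁻¹ p` is
`μ(p) + |q|`, and that of `p' q'⁻¹` is at least `μ(p')`. Every rule of Σ except
`x_j x_i → x_i x_{j+1}` keeps the potential or lowers it, and that rule never fires: if the
negative letters of a word are pushed to its right end by the other rules, the positive letters
come out in non-decreasing order, and this property holds for `q⁻¹ p` and is preserved by
every rule.
-/

/-- The subscript `x_b` acquires when `x_k⁻¹` is moved from its left to its right. -/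
def shiftPast (k b : ℕ) : ℕ := if k < b then b + 1 else b

/-- Reads a word from right to left. The state is the subscript that the nearest positive letter
read so far has once the negative letters read after it have been moved past it; each positive
letter must be at most that subscript. -/
def SortedFromRight : Option ℕ → Word → Prop
  | _, [] => True
  | s, (k, true) :: w => (∀ b ∈ s, k ≤ b) ∧ SortedFromRight (some k) w
  | s, (k, false) :: w => SortedFromRight (s.map (shiftPast k)) w

def boundFromRight : Option ℕ → Word → Option ℕ
  | s, [] => s
  | _, (k, true) :: w => boundFromRight (some k) w
  | s, (k, false) :: w => boundFromRight (s.map (shiftPast k)) w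

def PositivesSorted (w : Word) : Prop := SortedFromRight none w.reverse

/-- `potential c w` is the potential of `w` preceded by `c` negative letters. -/
def potential : ℕ → Word → ℕ
  | _, [] => 0
  | c, (k, true) :: w => max (k + c) (potential c w)
  | c, (_, false) :: w => potential (c + 1) w

def negCount (w : Word) : ℕ := w.countP fun x => !x.2

lemma sortedFromRight_append (u : Word) : ∀ (s : Option ℕ) (v : Word),
    SortedFromRight s (u ++ v) ↔ SortedFromRight s u ∧ SortedFromRight (boundFromRight s u) v := by
  induction u with
  | nil => simp [SortedFromRight, boundFromRight]
  | cons x u ih =>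
    obtain ⟨_, _ | _⟩ := x <;> simp [SortedFromRight, boundFromRight, ih, and_assoc]

lemma potential_append (u : Word) : ∀ (c : ℕ) (v : Word),
    potential c (u ++ v) = max (potential c u) (potential (c + negCount u) v) := by
  induction u with
  | nil => simp [potential, negCount]
  | cons x u ih =>
    intro c v
    obtain ⟨_, _ | _⟩ := x
    · simp [potential, negCount, ih, Nat.add_comm 1, Nat.add_assoc]
    · simp [potential, negCount, ih, max_assoc]

lemma SigmaRule.negCount_eq {l r : Word} (h : SigmaRule l r) : negCount r = negCount l := by
  cases h <;> simp [negCount, pos, neg]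

lemma SigmaRule.sortedFromRight {l r : Word} (h : SigmaRule l r) {s : Option ℕ}
    (hl : SortedFromRight s l.reverse) :
    SortedFromRight s r.reverse ∧ boundFromRight s r.reverse = boundFromRight s l.reverse := by
  cases h <;> cases s <;>
    simp_all [SortedFromRight, boundFromRight, shiftPast, pos, neg] <;> (try split_ifs) <;> omega

lemma SigmaRule.potential_le {l r : Word} (h : SigmaRule l r) {s : Option ℕ}
    (hl : SortedFromRight s l.reverse) (c : ℕ) : potential c r ≤ potential c l := by
  cases h <;> simp_all [SortedFromRight, potential, pos, neg] <;> omega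

lemma Step.positivesSorted_and_potential_le {u v : Word} (huv : Step u v)
    (hu : PositivesSorted u) (c : ℕ) : PositivesSorted v ∧ potential c v ≤ potential c u := by
  obtain ⟨a, b, l, r, hlr, rfl, rfl⟩ := huv
  obtain ⟨hb, hl, ha⟩ : SortedFromRight none b.reverse ∧
      SortedFromRight (boundFromRight none b.reverse) l.reverse ∧
      SortedFromRight (boundFromRight (boundFromRight none b.reverse) l.reverse) a.reverse := by
    simpa [PositivesSorted, sortedFromRight_append] using hu
  obtain ⟨hr, hbound⟩ := hlr.sortedFromRight hl
  constructor
  · simpa [PositivesSorted, sortedFromRight_append, hbound] using ⟨hb, hr, ha⟩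
  · simp only [List.append_assoc, potential_append, hlr.negCount_eq]
    exact max_le_max le_rfl (max_le_max (hlr.potential_le hl _) le_rfl)

lemma potential_le_of_reflTransGen {u v : Word} (huv : Relation.ReflTransGen Step u v)
    (hu : PositivesSorted u) (c : ℕ) : potential c v ≤ potential c u := by
  suffices PositivesSorted v ∧ potential c v ≤ potential c u from this.2
  induction huv with
  | refl => exact ⟨hu, le_rfl⟩
  | tail _ hstep ih =>
    obtain ⟨hsorted, hle⟩ := ih
    obtain ⟨hsorted', hle'⟩ := hstep.positivesSorted_and_potential_le hsorted c
    exact ⟨hsorted', hle'.trans hle⟩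

lemma sortedFromRight_map_neg (s : Option ℕ) (l : List ℕ) : SortedFromRight s (l.map neg) := by
  induction l generalizing s with
  | nil => trivial
  | cons k l ih => exact ih _

lemma sortedFromRight_map_pos {s : Option ℕ} {l : List ℕ} (hl : l.Pairwise (· ≥ ·))
    (hs : ∀ k ∈ l, ∀ b ∈ s, k ≤ b) : SortedFromRight s (l.map pos) := by
  induction l generalizing s with
  | nil => trivial
  | cons k l ih =>
    rw [List.pairwise_cons] at hl
    refine ⟨hs k List.mem_cons_self, ih hl.2 ?_⟩
    intro m hm b hb
    obtain rfl := Option.mem_some_iff.mp hb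
    exact hl.1 m hm

lemma positivesSorted_negs_append_pos (q : List ℕ) {p : List ℕ} (hp : p.Pairwise (· ≤ ·)) :
    PositivesSorted (q.map neg ++ p.map pos) := by
  rw [PositivesSorted, List.reverse_append, sortedFromRight_append, ← List.map_reverse,
    ← List.map_reverse]
  exact ⟨sortedFromRight_map_pos (List.pairwise_reverse.mpr hp) (by simp),
    sortedFromRight_map_neg _ _⟩

lemma potential_map_neg (c : ℕ) (l : List ℕ) : potential c (l.map neg) = 0 := by
  induction l generalizing c with
  | nil => rfl
  | cons k l ih => exact ih _

lemma negCount_map_neg (l : List ℕ) : negCount (l.map neg) = l.length := by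
  simp [negCount, neg, Function.comp_def]

lemma potential_map_pos_le (c : ℕ) (l : List ℕ) : potential c (l.map pos) ≤ mu l + c := by
  induction l with
  | nil => simp [potential]
  | cons k l ih =>
    simp only [List.map_cons, potential, pos, mu, List.foldr] at *
    omega

lemma potential_zero_map_pos (l : List ℕ) : potential 0 (l.map pos) = mu l := by
  induction l with
  | nil => rfl
  | cons k l ih =>
    simp only [List.map_cons, potential, pos, mu, List.foldr] at *
    omega

theorem mu_of_standard_form_of_conj_general (p q p' q' : List ℕ)
    (hp : List.Pairwise (· ≤ ·) p)
    (hr : Relation.ReflTransGen Step (q.reverse.map neg ++ p.map pos)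
      (p'.map pos ++ q'.reverse.map neg)) :
    mu p' ≤ mu p + q.length := by
  have hdecrease := potential_le_of_reflTransGen hr (positivesSorted_negs_append_pos _ hp) 0
  calc mu p' = potential 0 (p'.map pos) := (potential_zero_map_pos p').symm
    _ ≤ potential 0 (p'.map pos ++ q'.reverse.map neg) := by
      rw [potential_append]; exact le_max_left _ _
    _ ≤ potential 0 (q.reverse.map neg ++ p.map pos) := hdecrease
    _ ≤ mu p + q.length := by
      rw [potential_append, potential_map_neg, negCount_map_neg, List.length_reverse]
      simpa using potential_map_pos_le q.length p

/-- If `p`, `q` are MP-words and the standard form of `q⁻¹ p` is `p' (q')⁻¹` with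
`p'`, `q'` MP-words, then `μ(p') ≤ μ(p) + |q|`. -/
theorem mu_of_standard_form_of_conj (p q p' q' : List ℕ)
    (hp : List.Pairwise (· ≤ ·) p) (hq : List.Pairwise (· ≤ ·) q)
    (hp' : List.Pairwise (· ≤ ·) p') (hq' : List.Pairwise (· ≤ ·) q')
    (hr : Relation.ReflTransGen Step (q.reverse.map neg ++ p.map pos)
      (p'.map pos ++ q'.reverse.map neg))
    (hirr : SigmaIrreducible (p'.map pos ++ q'.reverse.map neg)) :
    mu p' ≤ mu p + q.length :=
  mu_of_standard_form_of_conj_general p q p' q' hp hr
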